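/- arXiv:2406.16755 — 2 statements merged into one kernel-verified Lean document; each statement's English description precedes it below -/
import Mathlib

section
/- For the tangent algebroid TM (anchor the identity, bracket the Lie bracket of vector fields) with a connection ∇, define the dual connection ∇̄ by ∇̄_V W = ∇_W V + [V, W]. Then the basic curvature of ∇, defined by R^bas_∇(ν₁,ν₂)(V) = ∇_V([ν₁,ν₂]) − [∇_V ν₁, ν₂] − [ν₁, ∇_V ν₂] − ∇_{∇^bas_{ν₂}V} ν₁ + ∇_{∇^bas_{ν₁}V} ν₂ (with ∇^bas_ν V = ∇_V ν + [ν, V]), vanishes if and only if the curvature of ∇̄ vanishes. -/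
/-- for the tangent algebroid (`X` the Lie ring of vector fields, anchor the
identity, bracket the Lie bracket) with a connection `D`, define the dual connection
`D̄ V W = D W V + ⁅V, W⁆`.  Then the basic curvature
`R^bas(ν₁,ν₂)(V) = D_V ⁅ν₁,ν₂⁆ - ⁅D_V ν₁, ν₂⁆ - ⁅ν₁, D_V ν₂⁆ - D_{D̄_{ν₂}V} ν₁ +
D_{D̄_{ν₁}V} ν₂` vanishes identically if and only if the curvature of `D̄` vanishes
identically. -/
theorem basic_curvature_vanishes_iff_dual_flat
    {X : Type*} [LieRing X] (D : X → X → X) :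
    let Dbar : X → X → X := fun V W => D W V + ⁅V, W⁆
    (∀ ν₁ ν₂ V : X,
        D V ⁅ν₁, ν₂⁆ - ⁅D V ν₁, ν₂⁆ - ⁅ν₁, D V ν₂⁆
          - D (Dbar ν₂ V) ν₁ + D (Dbar ν₁ V) ν₂ = 0)
      ↔ (∀ V W U : X,
          Dbar V (Dbar W U) - Dbar W (Dbar V U) - Dbar ⁅V, W⁆ U = 0) := by
  intro Dbar
  have key : ∀ V W U : X,
      Dbar V (Dbar W U) - Dbar W (Dbar V U) - Dbar ⁅V, W⁆ U =
        -(D U ⁅V, W⁆ - ⁅D U V, W⁆ - ⁅V, D U W⁆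
          - D (Dbar W U) V + D (Dbar V U) W) := by
    intro V W U
    simp only [Dbar, lie_add, lie_lie, ← lie_skew W (D U V)]
    abel
  constructor
  · intro h V W U
    rw [key, h]
    simp
  · intro h ν₁ ν₂ V
    have := h ν₁ ν₂ V
    rw [key] at this
    have := neg_eq_zero.mp (this ▸ rfl : -(D V ⁅ν₁, ν₂⁆ - ⁅D V ν₁, ν₂⁆ - ⁅ν₁, D V ν₂⁆
          - D (Dbar ν₂ V) ν₁ + D (Dbar ν₁ V) ν₂) = 0)
    exact this
end

section
/- If ∇ is a connection on TM whose basic connection ∇^bas_V W = ∇_W V + [V,W] is flat, then the torsion ζ := t_∇ = −t_{∇^bas} of ∇ satisfies d^{∇^bas} ζ = 0, where d^{∇^bas} is the exterior covariant derivative of ∇^bas; i.e., (d^{∇^bas} t_{∇^bas})(V₁,V₂,V₃) = 0 for all vector fields V₁, V₂, V₃. This follows from the first Bianchi identity (d^{∇^bas} t_{∇^bas})(V₁,V₂,V₃) = R_{∇^bas}(V₁,V₂)V₃ + R_{∇^bas}(V₂,V₃)V₁ + R_{∇^bas}(V₃,V₁)V₂ together with flatness of ∇^bas. -/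
/-- if the basic connection `D^bas V W = D W V + ⁅V,W⁆` of a connection `D` on
`TM` is flat, then the torsion `ζ := t_D = -t_{D^bas}` satisfies `d^{D^bas} t_{D^bas} = 0`,
where `d^{D^bas}` is the exterior covariant derivative of `D^bas`.  `X` is the Lie ring of
vector fields and `D` is additive in each slot. -/
theorem flat_basic_connection_torsion_closed
    {X : Type*} [LieRing X] (D : X → X → X)
    (hadd1 : ∀ V W U : X, D (V + W) U = D V U + D W U)
    (hadd2 : ∀ V W U : X, D V (W + U) = D V W + D V U)
    (hflat : ∀ V W U : X,
      (D (D U W + ⁅W, U⁆) V + ⁅V, D U W + ⁅W, U⁆⁆)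
        - (D (D U V + ⁅V, U⁆) W + ⁅W, D U V + ⁅V, U⁆⁆)
        - (D U ⁅V, W⁆ + ⁅⁅V, W⁆, U⁆) = 0) :
    let Dbas : X → X → X := fun V W => D W V + ⁅V, W⁆
    let tbas : X → X → X := fun V W => Dbas V W - Dbas W V - ⁅V, W⁆
    (∀ V W : X, D V W - D W V - ⁅V, W⁆ = - tbas V W)
    ∧ (∀ V₁ V₂ V₃ : X,
        Dbas V₁ (tbas V₂ V₃) - Dbas V₂ (tbas V₁ V₃) + Dbas V₃ (tbas V₁ V₂)
          - tbas ⁅V₁, V₂⁆ V₃ + tbas ⁅V₁, V₃⁆ V₂ - tbas ⁅V₂, V₃⁆ V₁ = 0) := by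
  intro Dbas tbas
  have hz1 : ∀ U : X, D 0 U = 0 := fun U => by
    have := (hadd1 0 0 U).symm; simpa using this
  have hz2 : ∀ V : X, D V 0 = 0 := fun V => by
    have := (hadd2 V 0 0).symm; simpa using this
  have hneg1 : ∀ V U : X, D (-V) U = - D V U := fun V U => by
    have h := hadd1 V (-V) U
    simp [hz1] at h
    exact eq_neg_of_add_eq_zero_right h.symm
  have hneg2 : ∀ V U : X, D V (-U) = - D V U := fun V U => by
    have h := hadd2 V U (-U)
    simp [hz2] at h
    exact eq_neg_of_add_eq_zero_right h.symm
  have hsub1 : ∀ V W U : X, D (V - W) U = D V U - D W U := fun V W U => by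
    rw [sub_eq_add_neg, hadd1, hneg1, ← sub_eq_add_neg]
  have hsub2 : ∀ V W U : X, D V (W - U) = D V W - D V U := fun V W U => by
    rw [sub_eq_add_neg, hadd2, hneg2, ← sub_eq_add_neg]
  constructor
  · intro V W
    simp only [Dbas, tbas]
    rw [← lie_skew V W]
    abel
  · intro V₁ V₂ V₃
    have h1 := hflat V₁ V₂ V₃
    have h2 := hflat V₂ V₃ V₁
    have h3 := hflat V₃ V₁ V₂
    have hzD : D V₂ ⁅V₁, V₃⁆ + D V₂ ⁅V₃, V₁⁆ = 0 := by
      rw [← hadd2]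
      have : ⁅V₁, V₃⁆ + ⁅V₃, V₁⁆ = (0 : X) := by
        rw [← lie_skew V₁ V₃]; abel
      rw [this, hz2]
    have hjac : ⁅⁅V₁, V₂⁆, V₃⁆ + ⁅⁅V₂, V₃⁆, V₁⁆ + ⁅⁅V₃, V₁⁆, V₂⁆ = (0 : X) := by
      rw [← lie_skew ⁅V₁, V₂⁆ V₃, ← lie_skew ⁅V₂, V₃⁆ V₁, ← lie_skew ⁅V₃, V₁⁆ V₂,
        ← neg_add, ← neg_add, neg_eq_zero]
      exact lie_jacobi V₃ V₁ V₂
    have key :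
        Dbas V₁ (tbas V₂ V₃) - Dbas V₂ (tbas V₁ V₃) + Dbas V₃ (tbas V₁ V₂)
          - tbas ⁅V₁, V₂⁆ V₃ + tbas ⁅V₁, V₃⁆ V₂ - tbas ⁅V₂, V₃⁆ V₁
        = ((D (D V₃ V₂ + ⁅V₂, V₃⁆) V₁ + ⁅V₁, D V₃ V₂ + ⁅V₂, V₃⁆⁆)
            - (D (D V₃ V₁ + ⁅V₁, V₃⁆) V₂ + ⁅V₂, D V₃ V₁ + ⁅V₁, V₃⁆⁆)
            - (D V₃ ⁅V₁, V₂⁆ + ⁅⁅V₁, V₂⁆, V₃⁆))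
          + ((D (D V₁ V₃ + ⁅V₃, V₁⁆) V₂ + ⁅V₂, D V₁ V₃ + ⁅V₃, V₁⁆⁆)
            - (D (D V₁ V₂ + ⁅V₂, V₁⁆) V₃ + ⁅V₃, D V₁ V₂ + ⁅V₂, V₁⁆⁆)
            - (D V₁ ⁅V₂, V₃⁆ + ⁅⁅V₂, V₃⁆, V₁⁆))
          + ((D (D V₂ V₁ + ⁅V₁, V₂⁆) V₃ + ⁅V₃, D V₂ V₁ + ⁅V₁, V₂⁆⁆)
            - (D (D V₂ V₃ + ⁅V₃, V₂⁆) V₁ + ⁅V₁, D V₂ V₃ + ⁅V₃, V₂⁆⁆)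
            - (D V₂ ⁅V₃, V₁⁆ + ⁅⁅V₃, V₁⁆, V₂⁆))
          + (D V₂ ⁅V₁, V₃⁆ + D V₂ ⁅V₃, V₁⁆)
          + (⁅⁅V₁, V₂⁆, V₃⁆ + ⁅⁅V₂, V₃⁆, V₁⁆ + ⁅⁅V₃, V₁⁆, V₂⁆) := by
      simp only [Dbas, tbas, hadd1, hadd2, hsub1, hsub2, lie_add, add_lie, lie_sub, sub_lie]
      abel
    rw [key, h1, h2, h3, hzD, hjac]
    abel
end
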